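/- arXiv:1405.4006 — 3 statements merged into one kernel-verified Lean document; each statement's English description precedes it below -/
import Mathlib

section
/- Let A : X ⇒ X and B : X ⇒ X be maximally monotone operators that are both 3* monotone, and set D = dom A − dom B, R = ran A + ran B. Then cl(ran(Id − T_{(A,B)})) = cl(D ∩ R) = cl D ∩ cl R, and the infimal displacement vector v_{(A,B)} (the minimal-norm element of cl(ran(Id − T_{(A,B)}))) equals the minimal-norm element of the closed convex set cl D ∩ cl R. -/
open Set Pointwise

/-- Domain of a set-valued operator. -/
def svDom {X : Type*} (A : X → Set X) : Set X := {x | (A x).Nonempty}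

/-- Range of a set-valued operator. -/
def svRan {X : Type*} (A : X → Set X) : Set X := ⋃ x, A x

/-- Monotonicity of a set-valued operator. -/
def IsMonotoneOp {X : Type*} [NormedAddCommGroup X] [InnerProductSpace ℝ X]
    (A : X → Set X) : Prop :=
  ∀ ⦃x u y v : X⦄, u ∈ A x → v ∈ A y → 0 ≤ (inner ℝ (x - y) (u - v) : ℝ)

/-- Maximal monotonicity of a set-valued operator. -/
def IsMaxMonotoneOp {X : Type*} [NormedAddCommGroup X] [InnerProductSpace ℝ X]
    (A : X → Set X) : Prop :=
  IsMonotoneOp A ∧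
    ∀ x u : X, (∀ y v : X, v ∈ A y → 0 ≤ (inner ℝ (x - y) (u - v) : ℝ)) → u ∈ A x

/-- `A` is 3* monotone (rectangular): for every `x ∈ dom A` and `v ∈ ran A`, the set
`{⟪x - z, v - w⟫ : (z,w) ∈ gra A}` is bounded below. -/
def Is3StarMonotoneOp {X : Type*} [NormedAddCommGroup X] [InnerProductSpace ℝ X]
    (A : X → Set X) : Prop :=
  ∀ x ∈ svDom A, ∀ v ∈ svRan A,
    BddBelow {r : ℝ | ∃ z w : X, w ∈ A z ∧ r = (inner ℝ (x - z) (v - w) : ℝ)}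

/-- Two sets are nearly equal if they have the same closure and the same relative
(intrinsic) interior. -/
def NearEq {X : Type*} [NormedAddCommGroup X] [NormedSpace ℝ X] (C D : Set X) : Prop :=
  closure C = closure D ∧ intrinsicInterior ℝ C = intrinsicInterior ℝ D

/-- `J` is the resolvent of `A`: the single-valued, everywhere-defined map with
`x - J x ∈ A (J x)` for all `x`. -/
def IsResolventOf {X : Type*} [NormedAddCommGroup X] (J : X → X) (A : X → Set X) : Prop :=
  ∀ x : X, x - J x ∈ A (J x)

/-- The Douglas–Rachford operator `T = Id - J_A + J_B ∘ (2 J_A - Id)` built from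
the resolvents `J_A` and `J_B`. -/
noncomputable def drT {X : Type*} [NormedAddCommGroup X] [NormedSpace ℝ X]
    (JA JB : X → X) : X → X :=
  fun x => x - JA x + JB ((2 : ℝ) • JA x - x)

/-!
`Id - T` is firmly nonexpansive, being half of `Id - R_B ∘ R_A` for the nonexpansive reflections
`R_J = 2 J - Id`. Hence `t Id + (Id - T)` is onto for `t > 0`, and solving
`t x + (x - T x) = w + t z` shows (Brezis–Haraux) that `w ∈ cl ran (Id - T)` as soon as
`⟪w - (x - T x), x - z⟫` grows sublinearly. By monotonicity this growth condition holds for convex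
combinations of points of `cl ran (Id - T)`, which is therefore convex; by 3* monotonicity of `A`
and `B` it holds on `cl D ∩ cl R`. As `ran (Id - T) ⊆ D ∩ R`, the three closures coincide, and a
closed convex set has a unique element of minimal norm.
-/

open RealInnerProductSpace

theorem Convex.eq_of_forall_norm_le {E : Type*} [NormedAddCommGroup E] [NormedSpace ℝ E]
    [StrictConvexSpace ℝ E] {K : Set E} (hK : Convex ℝ K) {x y : E} (hx : x ∈ K) (hy : y ∈ K)
    (hxK : ∀ z ∈ K, ‖x‖ ≤ ‖z‖) (hyK : ∀ z ∈ K, ‖y‖ ≤ ‖z‖) : x = y := by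
  by_contra hne
  have hmid : (1 / 2 : ℝ) • (x + y) ∈ K := by
    rw [smul_add]; exact hK hx hy (by norm_num) (by norm_num) (by norm_num)
  exact ((norm_midpoint_lt_iff (le_antisymm (hxK y hy) (hyK x hx))).2 hne).not_ge (hxK _ hmid)

section MonotoneSplitting

variable {X : Type*} [NormedAddCommGroup X] [InnerProductSpace ℝ X]

def FirmlyNonexpansive (M : X → X) : Prop :=
  ∀ x y, ‖M x - M y‖ ^ 2 ≤ ⟪x - y, M x - M y⟫

namespace FirmlyNonexpansive

variable {M : X → X}

theorem inner_nonneg (hM : FirmlyNonexpansive M) (x y : X) : 0 ≤ ⟪x - y, M x - M y⟫ :=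
  (sq_nonneg _).trans (hM x y)

theorem norm_sub_le (hM : FirmlyNonexpansive M) (x y : X) : ‖M x - M y‖ ≤ ‖x - y‖ := by
  have h := (hM x y).trans (real_inner_le_norm _ _)
  nlinarith [norm_nonneg (M x - M y), norm_nonneg (x - y)]

theorem iff_norm_reflection_sub_le :
    FirmlyNonexpansive M ↔
      ∀ x y, ‖((2 : ℝ) • M x - x) - ((2 : ℝ) • M y - y)‖ ≤ ‖x - y‖ := by
  have key : ∀ x y, ‖((2 : ℝ) • M x - x) - ((2 : ℝ) • M y - y)‖ ^ 2 =
      4 * (‖M x - M y‖ ^ 2 - ⟪x - y, M x - M y⟫) + ‖x - y‖ ^ 2 := by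
    intro x y
    rw [show ((2 : ℝ) • M x - x) - ((2 : ℝ) • M y - y) = (2 : ℝ) • (M x - M y) - (x - y) by
      module, norm_sub_sq_real, norm_smul, real_inner_smul_left, real_inner_comm]
    norm_num
    ring
  refine forall₂_congr fun x y => ?_
  rw [← sq_le_sq₀ (norm_nonneg _) (norm_nonneg _), key]
  constructor <;> intro h <;> linarith

theorem exists_smul_add_eq [CompleteSpace X] (hM : FirmlyNonexpansive M) {t : ℝ} (ht : 0 < t)
    (c : X) : ∃ x, t • x + M x = c := by
  have hN := iff_norm_reflection_sub_le.1 hM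
  set K : NNReal := ⟨(2 * t + 1)⁻¹, by positivity⟩
  -- `t x + M x = c` as a fixed-point equation of a `(2 t + 1)⁻¹`-contraction built from the
  -- nonexpansive reflection `2 M - Id`
  set f : X → X := fun x => (2 * t + 1)⁻¹ • ((2 : ℝ) • c - ((2 : ℝ) • M x - x))
  have hK : K < 1 := by
    rw [← NNReal.coe_lt_coe]
    exact inv_lt_one_of_one_lt₀ (by linarith)
  have hf : ContractingWith K f := by
    refine ⟨hK, LipschitzWith.of_dist_le_mul fun x y => ?_⟩
    rw [dist_eq_norm, dist_eq_norm, ← smul_sub, norm_smul, Real.norm_of_nonneg (by positivity),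
      show (2 : ℝ) • c - ((2 : ℝ) • M x - x) - ((2 : ℝ) • c - ((2 : ℝ) • M y - y)) =
        -(((2 : ℝ) • M x - x) - ((2 : ℝ) • M y - y)) by abel, norm_neg]
    exact mul_le_mul_of_nonneg_left (hN x y) (by positivity)
  have : Nonempty X := ⟨0⟩
  refine ⟨ContractingWith.fixedPoint f hf, ?_⟩
  have hx := hf.fixedPoint_isFixedPt
  set x := ContractingWith.fixedPoint f hf
  have hx' : (2 : ℝ) • c - ((2 : ℝ) • M x - x) = (2 * t + 1) • x := by
    have h := congrArg ((2 * t + 1) • ·) hx.eq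
    simpa only [f, smul_inv_smul₀ (by positivity : (2 * t + 1) ≠ 0)] using h
  linear_combination (norm := module) (-2⁻¹ : ℝ) • hx'

end FirmlyNonexpansive

theorem IsResolventOf.firmlyNonexpansive {A : X → Set X} {J : X → X} (hJ : IsResolventOf J A)
    (hA : IsMonotoneOp A) : FirmlyNonexpansive J := by
  intro x y
  have h : 0 ≤ ⟪J x - J y, (x - J x) - (y - J y)⟫ := hA (hJ x) (hJ y)
  rw [show (x - J x) - (y - J y) = (x - y) - (J x - J y) by abel, inner_sub_right,
    real_inner_self_eq_norm_sq, real_inner_comm] at h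
  linarith

theorem sub_drT_eq (JA JB : X → X) (x : X) :
    x - drT JA JB x = JA x - JB ((2 : ℝ) • JA x - x) := by
  simp only [drT]
  abel

theorem firmlyNonexpansive_sub_drT {JA JB : X → X} (hJA : FirmlyNonexpansive JA)
    (hJB : FirmlyNonexpansive JB) : FirmlyNonexpansive fun x => x - drT JA JB x := by
  -- `2 (Id - T) - Id = -(R_B ∘ R_A)` for the reflections `R_J = 2 J - Id`
  rw [FirmlyNonexpansive.iff_norm_reflection_sub_le] at *
  intro x y
  simp only [sub_drT_eq]
  calc _ = ‖((2 : ℝ) • JB ((2 : ℝ) • JA x - x) - ((2 : ℝ) • JA x - x)) -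
          ((2 : ℝ) • JB ((2 : ℝ) • JA y - y) - ((2 : ℝ) • JA y - y))‖ := by
        rw [← norm_neg]
        congr 1
        module
    _ ≤ _ := hJB _ _
    _ ≤ _ := hJA x y

theorem range_sub_drT_subset {A B : X → Set X} {JA JB : X → X} (hJA : IsResolventOf JA A)
    (hJB : IsResolventOf JB B) :
    range (fun x => x - drT JA JB x) ⊆ (svDom A - svDom B) ∩ (svRan A + svRan B) := by
  rintro _ ⟨x, rfl⟩
  refine ⟨?_, ?_⟩
  · simp only [sub_drT_eq]
    exact sub_mem_sub ⟨_, hJA x⟩ ⟨_, hJB _⟩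
  · simp only [show x - drT JA JB x =
        (x - JA x) + ((2 : ℝ) • JA x - x - JB ((2 : ℝ) • JA x - x)) by rw [sub_drT_eq]; module]
    exact add_mem_add (mem_iUnion.2 ⟨_, hJA x⟩) (mem_iUnion.2 ⟨_, hJB _⟩)

section SublinearPairing

variable {M : X → X}

/-- A relaxed Brezis–Haraux condition on `w` relative to the range of `M`. -/
def HasSublinearPairing (M : X → X) (w : X) : Prop :=
  ∀ ε > 0, ∃ z : X, ∃ C K : ℝ, 0 ≤ K ∧
    ∀ x, ⟪w - M x, x - z⟫ ≤ C + ε * ‖x - z‖ + K * ‖M x‖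

theorem inner_sub_le_of_norm_sub_le (hM : ∀ x y, 0 ≤ ⟪x - y, M x - M y⟫) {v y : X} {ε : ℝ}
    (hv : ‖v - M y‖ ≤ ε) (x : X) : ⟪v - M x, x - y⟫ ≤ ε * ‖x - y‖ := by
  have hmono := hM x y
  calc ⟪v - M x, x - y⟫ = ⟪v - M y, x - y⟫ - ⟪x - y, M x - M y⟫ := by
        rw [real_inner_comm (M x - M y) (x - y), ← inner_sub_left]; congr 1; abel
    _ ≤ ‖v - M y‖ * ‖x - y‖ := by linarith [real_inner_le_norm (v - M y) (x - y)]
    _ ≤ ε * ‖x - y‖ := by gcongr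

theorem norm_sub_le_of_sub_eq_smul (hM : ∀ x y, 0 ≤ ⟪x - y, M x - M y⟫) {w x z : X} {t : ℝ}
    (ht : 0 < t) (hx : w - M x = t • (x - z)) : ‖w - M x‖ ≤ ‖w - M z‖ := by
  have h := inner_sub_le_of_norm_sub_le hM le_rfl (v := w) (y := z) x
  rw [hx, real_inner_smul_left, real_inner_self_eq_norm_sq] at h
  rw [hx, norm_smul, Real.norm_of_nonneg ht.le]
  rcases (norm_nonneg (x - z)).eq_or_lt with h0 | h0
  · rw [← h0, mul_zero]; exact norm_nonneg _
  · nlinarith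

theorem FirmlyNonexpansive.mem_closure_range [CompleteSpace X] (hM : FirmlyNonexpansive M)
    {w : X} (hw : HasSublinearPairing M w) : w ∈ closure (range M) := by
  rw [Metric.mem_closure_iff]
  intro δ hδ
  obtain ⟨z, C, K, hK, hbound⟩ := hw (δ / 2) (by positivity)
  set B := C + K * (‖w‖ + ‖w - M z‖)
  set t := δ ^ 2 / (8 * (|B| + 1))
  have ht : 0 < t := by positivity
  -- `x` is the point with `w - M x = t (x - z)`; the pairing bound then forces `t ‖x - z‖ → 0`
  obtain ⟨x, hx⟩ := hM.exists_smul_add_eq ht (w + t • z)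
  have heq : w - M x = t • (x - z) := by linear_combination (norm := module) (-1 : ℝ) • hx
  have hclose := norm_sub_le_of_sub_eq_smul hM.inner_nonneg ht heq
  have hMx : ‖M x‖ ≤ ‖w‖ + ‖w - M z‖ := by
    linarith [norm_le_norm_add_norm_sub' (M x) w, norm_sub_rev (M x) w]
  set r := ‖x - z‖
  have hnorm : ‖w - M x‖ = t * r := by rw [heq, norm_smul, Real.norm_of_nonneg ht.le]
  have hinner : ⟪w - M x, x - z⟫ = t * r ^ 2 := by
    rw [heq, real_inner_smul_left, real_inner_self_eq_norm_sq]
  have hmain : t * r ^ 2 ≤ B + δ / 2 * r := by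
    have := hbound x
    nlinarith [mul_le_mul_of_nonneg_left hMx hK]
  have htB : t * B ≤ δ ^ 2 / 8 := by
    have : t * |B| ≤ δ ^ 2 / 8 := by
      rw [div_mul_eq_mul_div, div_le_div_iff₀ (by positivity) (by norm_num)]
      nlinarith [abs_nonneg B, sq_nonneg δ]
    nlinarith [le_abs_self B]
  refine ⟨M x, mem_range_self x, ?_⟩
  rw [dist_eq_norm, hnorm]
  have hsq : (t * r) ^ 2 ≤ t * B + δ / 2 * (t * r) := by nlinarith
  nlinarith [sq_nonneg (t * r - δ / 2), mul_nonneg ht.le (norm_nonneg (x - z))]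

theorem hasSublinearPairing_smul_add_smul (hM : ∀ x y, 0 ≤ ⟪x - y, M x - M y⟫)
    {v₀ v₁ : X} (hv₀ : v₀ ∈ closure (range M)) (hv₁ : v₁ ∈ closure (range M)) {a b : ℝ}
    (ha : 0 ≤ a) (hb : 0 ≤ b) (hab : a + b = 1) : HasSublinearPairing M (a • v₀ + b • v₁) := by
  intro ε hε
  rw [Metric.mem_closure_iff] at hv₀ hv₁
  obtain ⟨_, ⟨x₀, rfl⟩, h₀⟩ := hv₀ ε hε
  obtain ⟨_, ⟨x₁, rfl⟩, h₁⟩ := hv₁ ε hε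
  rw [dist_eq_norm] at h₀ h₁
  set d := ‖x₁ - x₀‖
  refine ⟨x₀, (ε + ‖v₁‖) * d, d, norm_nonneg _, fun x => ?_⟩
  have hb₀ := inner_sub_le_of_norm_sub_le hM h₀.le x
  have hb₁ : ⟪v₁ - M x, x - x₀⟫ ≤ ε * ‖x - x₀‖ + ((ε + ‖v₁‖) * d + d * ‖M x‖) := by
    have hsplit : ⟪v₁ - M x, x - x₀⟫ = ⟪v₁ - M x, x - x₁⟫ + ⟪v₁ - M x, x₁ - x₀⟫ := by
      rw [← inner_add_right]; congr 1; abel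
    have h₁' := inner_sub_le_of_norm_sub_le hM h₁.le x
    have hcs : ⟪v₁ - M x, x₁ - x₀⟫ ≤ (‖v₁‖ + ‖M x‖) * d :=
      (real_inner_le_norm _ _).trans (by gcongr; exact norm_sub_le _ _)
    have htri : ‖x - x₁‖ ≤ ‖x - x₀‖ + d := by
      simpa [d, norm_sub_rev x₁ x₀] using norm_sub_le_norm_sub_add_norm_sub x x₀ x₁
    nlinarith
  have hP : 0 ≤ (ε + ‖v₁‖) * d + d * ‖M x‖ := by positivity
  have hb1 : b ≤ 1 := by linarith
  rw [show a • v₀ + b • v₁ - M x = a • (v₀ - M x) + b • (v₁ - M x) by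
    linear_combination (norm := module) hab • M x, inner_add_left, real_inner_smul_left,
    real_inner_smul_left]
  have hsum : a * (ε * ‖x - x₀‖) + b * (ε * ‖x - x₀‖) = ε * ‖x - x₀‖ := by
    rw [← add_mul, hab, one_mul]
  nlinarith [mul_le_mul_of_nonneg_left hb₀ ha, mul_le_mul_of_nonneg_left hb₁ hb,
    mul_le_of_le_one_left hP hb1]

theorem FirmlyNonexpansive.convex_closure_range [CompleteSpace X] (hM : FirmlyNonexpansive M) :
    Convex ℝ (closure (range M)) :=
  fun _ hv₀ _ hv₁ _ _ ha hb hab =>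
    hM.mem_closure_range (hasSublinearPairing_smul_add_smul hM.inner_nonneg hv₀ hv₁ ha hb hab)

end SublinearPairing

theorem inner_sub_add_le {a u b v a₀ u₀ b₀ v₀ w : X} {LA LB ε : ℝ}
    (hab : a - b = u + v) (hA : LA ≤ ⟪a₀ - a, u₀ - u⟫) (hB : LB ≤ ⟪b₀ - b, v₀ - v⟫)
    (hD : ‖w - (a₀ - b₀)‖ ≤ ε) (hR : ‖w - (u₀ + v₀)‖ ≤ ε) :
    ⟪w - (u + v), (a + u) - (a₀ + u₀)⟫ ≤
      -LA - LB + ε * ‖(a + u) - (a₀ + u₀)‖ + 2 * ε * ‖v₀ - v‖ := by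
  obtain rfl : b = a - (u + v) := by rw [← hab]; abel
  -- the pairing splits into the two 3* terms, two `ε`-small terms and a negative square
  have hid : ⟪w - (u + v), (a + u) - (a₀ + u₀)⟫ =
      -⟪a₀ - a, u₀ - u⟫ - ⟪b₀ - (a - (u + v)), v₀ - v⟫ + ⟪w - (u₀ + v₀), (a + u) - (a₀ + u₀)⟫ +
        ⟪v₀ - v, (w - (a₀ - b₀)) - (w - (u₀ + v₀))⟫ - ‖(u₀ - u) + (v₀ - v)‖ ^ 2 := by
    rw [← real_inner_self_eq_norm_sq]
    simp only [inner_add_left, inner_add_right, inner_sub_left, inner_sub_right]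
    simp only [real_inner_comm]
    ring
  have hR' : ⟪w - (u₀ + v₀), (a + u) - (a₀ + u₀)⟫ ≤ ε * ‖(a + u) - (a₀ + u₀)‖ :=
    (real_inner_le_norm _ _).trans (by gcongr)
  have hDR : ⟪v₀ - v, (w - (a₀ - b₀)) - (w - (u₀ + v₀))⟫ ≤ ‖v₀ - v‖ * (2 * ε) :=
    (real_inner_le_norm _ _).trans (by gcongr; exact (norm_sub_le _ _).trans (by linarith))
  rw [hid]
  nlinarith [sq_nonneg ‖(u₀ - u) + (v₀ - v)‖]

theorem hasSublinearPairing_sub_drT {A B : X → Set X} {JA JB : X → X} (hA : IsMonotoneOp A)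
    (hA3 : Is3StarMonotoneOp A) (hB3 : Is3StarMonotoneOp B) (hJA : IsResolventOf JA A)
    (hJB : IsResolventOf JB B) {w : X}
    (hw : w ∈ closure (svDom A - svDom B) ∩ closure (svRan A + svRan B)) :
    HasSublinearPairing (fun x => x - drT JA JB x) w := by
  intro ε hε
  obtain ⟨hwD, hwR⟩ := hw
  rw [Metric.mem_closure_iff] at hwD hwR
  obtain ⟨_, ⟨a₀, ha₀, b₀, hb₀, rfl⟩, hD⟩ := hwD (ε / 5) (by positivity)
  obtain ⟨_, ⟨u₀, hu₀, v₀, hv₀, rfl⟩, hR⟩ := hwR (ε / 5) (by positivity)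
  rw [dist_eq_norm] at hD hR
  obtain ⟨LA, hLA⟩ := hA3 a₀ ha₀ u₀ hu₀
  obtain ⟨LB, hLB⟩ := hB3 b₀ hb₀ v₀ hv₀
  set c₀ := ‖a₀ + u₀ - JA (a₀ + u₀)‖ with hc₀
  clear_value c₀
  refine ⟨a₀ + u₀, -LA - LB + 2 * (ε / 5) * (‖v₀‖ + c₀), 2 * (ε / 5), by positivity,
    fun x => ?_⟩
  set a := JA x
  set u := x - a
  set b := JB ((2 : ℝ) • a - x)
  set v := (2 : ℝ) • a - x - b
  have hx : x = a + u := (add_sub_cancel a x).symm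
  have hMx : x - drT JA JB x = u + v := by rw [sub_drT_eq]; module
  have key := inner_sub_add_le (by rw [← hMx, sub_drT_eq]) (hLA ⟨a, u, hJA x, rfl⟩)
    (hLB ⟨b, v, hJB _, rfl⟩) hD.le hR.le
  have hu : ‖u‖ ≤ 2 * ‖x - (a₀ + u₀)‖ + c₀ := by
    rw [hc₀]
    generalize a₀ + u₀ = z
    have := (hJA.firmlyNonexpansive hA).norm_sub_le x z
    calc ‖u‖ = ‖(x - z) - (JA x - JA z) + (z - JA z)‖ := by congr 1; simp only [u, a]; abel
      _ ≤ _ := by linarith [norm_add_le ((x - z) - (JA x - JA z)) (z - JA z),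
                  norm_sub_le (x - z) (JA x - JA z)]
  have hv : ‖v₀ - v‖ ≤ ‖v₀‖ + ‖u + v‖ + (2 * ‖x - (a₀ + u₀)‖ + c₀) := by
    calc ‖v₀ - v‖ = ‖v₀ - (u + v) + u‖ := by congr 1; abel
      _ ≤ _ := by linarith [norm_add_le (v₀ - (u + v)) u, norm_sub_le v₀ (u + v)]
  simp only [hMx]
  rw [← hx] at key
  nlinarith [mul_le_mul_of_nonneg_left hv (by positivity : 0 ≤ 2 * (ε / 5))]

end MonotoneSplitting

/-- For maximally monotone, 3* monotone `A, B` with `D = dom A - dom B`,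
`R = ran A + ran B`: `cl (ran (Id - T_{(A,B)})) = cl (D ∩ R) = cl D ∩ cl R`, and the
infimal displacement vector (minimal-norm element of `cl (ran (Id - T_{(A,B)}))`)
equals the minimal-norm element of `cl D ∩ cl R`. -/
theorem closure_ran_id_sub_drT_and_infDisp {X : Type*} [NormedAddCommGroup X]
    [InnerProductSpace ℝ X] [FiniteDimensional ℝ X] (A B : X → Set X)
    (hA : IsMaxMonotoneOp A) (hB : IsMaxMonotoneOp B)
    (hA3 : Is3StarMonotoneOp A) (hB3 : Is3StarMonotoneOp B)
    (JA JB : X → X) (hJA : IsResolventOf JA A) (hJB : IsResolventOf JB B)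
    (v v' : X)
    (hv : v ∈ closure (Set.range fun x => x - drT JA JB x) ∧
      ∀ w ∈ closure (Set.range fun x => x - drT JA JB x), ‖v‖ ≤ ‖w‖)
    (hv' : v' ∈ closure (svDom A - svDom B) ∩ closure (svRan A + svRan B) ∧
      ∀ w ∈ closure (svDom A - svDom B) ∩ closure (svRan A + svRan B), ‖v'‖ ≤ ‖w‖) :
    closure (Set.range fun x => x - drT JA JB x) =
        closure ((svDom A - svDom B) ∩ (svRan A + svRan B)) ∧
      closure ((svDom A - svDom B) ∩ (svRan A + svRan B)) =
        closure (svDom A - svDom B) ∩ closure (svRan A + svRan B) ∧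
      v = v' := by
  have hM : FirmlyNonexpansive fun x => x - drT JA JB x :=
    firmlyNonexpansive_sub_drT (hJA.firmlyNonexpansive hA.1) (hJB.firmlyNonexpansive hB.1)
  have hsup : closure (svDom A - svDom B) ∩ closure (svRan A + svRan B) ⊆
      closure (Set.range fun x => x - drT JA JB x) := fun w hw =>
    hM.mem_closure_range (hasSublinearPairing_sub_drT hA.1 hA3 hB3 hJA hJB hw)
  have h₁ : closure (Set.range fun x => x - drT JA JB x) =
      closure ((svDom A - svDom B) ∩ (svRan A + svRan B)) :=
    (closure_mono (range_sub_drT_subset hJA hJB)).antisymm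
      ((closure_inter_subset_inter_closure _ _).trans hsup)
  have h₂ : closure ((svDom A - svDom B) ∩ (svRan A + svRan B)) =
      closure (svDom A - svDom B) ∩ closure (svRan A + svRan B) :=
    (closure_inter_subset_inter_closure _ _).antisymm (h₁ ▸ hsup)
  refine ⟨h₁, h₂, ?_⟩
  rw [← h₂, ← h₁] at hv'
  exact hM.convex_closure_range.eq_of_forall_norm_le hv.1 hv'.1 hv.2 hv'.2
end

section
/- Let H be a real Hilbert space (possibly infinite-dimensional), let U and V be closed linear subspaces of H with orthogonal projections P_U and P_V, and let T = Id − P_U + P_V ∘ (2P_U − Id) be the Douglas–Rachford operator of the pair (N_U, N_V). Then ran(Id − T) = (U + V) ∩ (U^⊥ + V^⊥), where the sums are Minkowski sums of subspaces. -/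
open Set Pointwise

private lemma proj_unique' {H : Type*} [NormedAddCommGroup H] [InnerProductSpace ℝ H]
    (U : Submodule ℝ H) {P : H → H} (hP : ∀ x : H, P x ∈ U ∧ x - P x ∈ Uᗮ)
    {x p : H} (hp : p ∈ U) (hxp : x - p ∈ Uᗮ) : P x = p := by
  have h1 : P x - p ∈ U := U.sub_mem (hP x).1 hp
  have h2 : P x - p ∈ Uᗮ := by
    have : P x - p = (x - p) - (x - P x) := by abel
    rw [this]; exact Uᗮ.sub_mem hxp (hP x).2
  have := h2 (P x - p) h1
  exact sub_eq_zero.mp (inner_self_eq_zero.mp this)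

/-- For closed linear subspaces `U, V` of a real Hilbert space with orthogonal
projections `P_U, P_V`, and `T = Id - P_U + P_V ∘ (2 P_U - Id)` the Douglas–Rachford
operator of `(N_U, N_V)`: `ran (Id - T) = (U + V) ∩ (U^⊥ + V^⊥)`. -/
theorem ran_id_sub_drT_subspaces {H : Type*} [NormedAddCommGroup H]
    [InnerProductSpace ℝ H] [CompleteSpace H]
    (U V : Submodule ℝ H) (hU : IsClosed (U : Set H)) (hV : IsClosed (V : Set H))
    (PU PV : H → H)
    (hPU : ∀ x : H, PU x ∈ U ∧ x - PU x ∈ Uᗮ)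
    (hPV : ∀ x : H, PV x ∈ V ∧ x - PV x ∈ Vᗮ)
    (T : H → H) (hT : ∀ x : H, T x = x - PU x + PV ((2 : ℝ) • PU x - x)) :
    Set.range (fun x => x - T x) =
      ((U : Set H) + (V : Set H)) ∩ ((Uᗮ : Set H) + (Vᗮ : Set H)) := by
  ext w
  constructor
  · rintro ⟨x, rfl⟩
    set r := (2 : ℝ) • PU x - x with hr
    have key : x - T x = PU x - PV r := by rw [hT]; abel
    constructor
    · refine Set.mem_add.mpr ⟨PU x, (hPU x).1, -(PV r), V.neg_mem (hPV r).1, ?_⟩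
      show PU x + -(PV r) = x - T x
      rw [key]; abel
    · refine Set.mem_add.mpr ⟨x - PU x, (hPU x).2, r - PV r, (hPV r).2, ?_⟩
      show x - PU x + (r - PV r) = x - T x
      rw [key, hr, two_smul]; abel
  · rintro ⟨huv, hab⟩
    obtain ⟨u, hu, v, hv, huv⟩ := Set.mem_add.mp huv
    obtain ⟨a, ha, b, hb, hab⟩ := Set.mem_add.mp hab
    refine ⟨u + a, ?_⟩
    have hPUx : PU (u + a) = u := proj_unique' U hPU hu (by simpa using ha)
    have hPVr : PV (u - a) = -v := by
      refine proj_unique' V hPV (V.neg_mem hv) ?_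
      have h' : a + b = u + v := hab.trans huv.symm
      have hbeq : b = u + v - a := by rw [eq_sub_iff_add_eq, ← h']; abel
      have : u - a - -v = b := by rw [hbeq]; abel
      rw [this]; exact hb
    show u + a - T (u + a) = w
    rw [hT, hPUx]
    have harg : (2 : ℝ) • u - (u + a) = u - a := by rw [two_smul]; abel
    rw [harg, hPVr, ← huv]
    abel
end

section
/- Let H be a real Hilbert space, let A : H ⇒ H be maximally monotone with resolvent J_A, and let B : H → H be a continuous linear monotone operator (⟨Bx, x⟩ ≥ 0 for all x) with resolvent J_B, i.e. J_B : H → H satisfies J_B x + B(J_B x) = x for all x. Let T = Id − J_A + J_B ∘ (2J_A − Id) and define the sum operator (A + B)(x) = {u + Bx : u ∈ A(x)}. Then ran(Id − T) = J_B(ran(A + B)) and ran(A + B) = (Id + B)(ran(Id − T)), where F(S) denotes the image of the set S under F. -/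
open Set Pointwise

/-! Monotonicity of `A` makes the resolvent `J_A` the inverse of `Id + A`, and monotonicity of
`B` makes `Id + B` injective, so that `J_B` is also a left inverse of `Id + B`. A direct
computation then gives `x - T x = J_B (x - J_A x + B (J_A x))`, and as `x` ranges over `H`
the argument `x - J_A x + B (J_A x)` ranges exactly over `ran (A + B)`: the point
`u + B z` with `u ∈ A z` is attained at `x = z + u`, where `J_A x = z`. -/

section Resolvent

variable {H : Type*} [NormedAddCommGroup H] [InnerProductSpace ℝ H]

theorem IsResolventOf.apply_eq_of_sub_mem {A : H → Set H} (hA : IsMonotoneOp A) {JA : H → H}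
    (hJA : IsResolventOf JA A) {x z : H} (hz : x - z ∈ A z) : JA x = z := by
  have hmono := hA (hJA x) hz
  rw [show x - JA x - (x - z) = -(JA x - z) by abel, inner_neg_right,
    real_inner_self_eq_norm_sq] at hmono
  have : ‖JA x - z‖ = 0 := by nlinarith [norm_nonneg (JA x - z)]
  exact sub_eq_zero.mp (norm_eq_zero.mp this)

theorem injective_add_apply_of_inner_apply_self_nonneg (B : H →L[ℝ] H)
    (hB : ∀ x : H, 0 ≤ (inner ℝ (B x) x : ℝ)) : Function.Injective fun x => x + B x := by
  intro a b hab
  have hzero : (a - b) + B (a - b) = 0 := by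
    rw [map_sub, show a - b + (B a - B b) = (a + B a) - (b + B b) by abel]
    exact sub_eq_zero.mpr hab
  have hinner := congrArg (fun v => (inner ℝ v (a - b) : ℝ)) hzero
  simp only [inner_add_left, real_inner_self_eq_norm_sq, inner_zero_left] at hinner
  have : ‖a - b‖ = 0 := by nlinarith [hB (a - b), norm_nonneg (a - b)]
  exact sub_eq_zero.mp (norm_eq_zero.mp this)

theorem resolvent_apply_add_apply (B : H →L[ℝ] H) (hB : ∀ x : H, 0 ≤ (inner ℝ (B x) x : ℝ))
    {JB : H → H} (hJB : ∀ x : H, JB x + B (JB x) = x) (y : H) : JB (y + B y) = y :=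
  injective_add_apply_of_inner_apply_self_nonneg B hB (hJB (y + B y))

theorem sub_drT_eq_s19 (B : H →L[ℝ] H) (hB : ∀ x : H, 0 ≤ (inner ℝ (B x) x : ℝ)) (JA : H → H)
    {JB : H → H} (hJB : ∀ x : H, JB x + B (JB x) = x) (x : H) :
    x - drT JA JB x = JB (x - JA x + B (JA x)) := by
  set q := JB ((2 : ℝ) • JA x - x)
  have hBq : B q = ((2 : ℝ) • JA x - x) - q := eq_sub_of_add_eq' (hJB _)
  have hsub : x - drT JA JB x = JA x - q := by simp only [drT, q]; abel
  rw [← resolvent_apply_add_apply B hB hJB (x - drT JA JB x), hsub, map_sub, hBq, two_smul]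
  congr 1
  abel

theorem svRan_add_eq_range_resolvent {A : H → Set H} (hA : IsMonotoneOp A) {JA : H → H}
    (hJA : IsResolventOf JA A) (B : H → H) :
    svRan (fun x => (fun u => u + B x) '' A x) = range fun x => x - JA x + B (JA x) := by
  ext w
  simp only [svRan, mem_iUnion, mem_image, mem_range]
  constructor
  · rintro ⟨z, u, hu, rfl⟩
    have hJAz : JA (z + u) = z := hJA.apply_eq_of_sub_mem hA (by simpa using hu)
    exact ⟨z + u, by rw [hJAz, add_sub_cancel_left]⟩
  · rintro ⟨x, rfl⟩
    exact ⟨JA x, x - JA x, hJA x, rfl⟩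

end Resolvent

/-- Let `A` be maximally monotone on a real Hilbert space `H` with resolvent `J_A`, let
`B` be a continuous linear monotone operator with resolvent `J_B` (so
`J_B x + B (J_B x) = x`), and let `T = Id - J_A + J_B ∘ (2 J_A - Id)`. Then
`ran (Id - T) = J_B (ran (A + B))` and `ran (A + B) = (Id + B) (ran (Id - T))`. -/
theorem ran_id_sub_drT_linear_case {H : Type*} [NormedAddCommGroup H]
    [InnerProductSpace ℝ H]
    (A : H → Set H) (hA : IsMaxMonotoneOp A)
    (JA : H → H) (hJA : IsResolventOf JA A)
    (B : H →L[ℝ] H) (hBmono : ∀ x : H, 0 ≤ (inner ℝ (B x) x : ℝ))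
    (JB : H → H) (hJB : ∀ x : H, JB x + B (JB x) = x)
    (T : H → H) (hT : ∀ x : H, T x = x - JA x + JB ((2 : ℝ) • JA x - x)) :
    Set.range (fun x => x - T x) =
        JB '' svRan (fun x => (fun u => u + B x) '' A x) ∧
      svRan (fun x => (fun u => u + B x) '' A x) =
        (fun x => x + B x) '' Set.range (fun x => x - T x) := by
  have hT' : T = drT JA JB := funext hT
  have hran :
      Set.range (fun x => x - T x) = JB '' svRan (fun x => (fun u => u + B x) '' A x) := by
    rw [svRan_add_eq_range_resolvent hA.1 hJA, ← range_comp, hT']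
    exact congrArg range (funext (sub_drT_eq_s19 B hBmono JA hJB))
  refine ⟨hran, ?_⟩
  rw [hran, image_image, funext hJB, image_id']
end
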